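/- Let R, R̄ > 0, let X be a finite set, and let P(x, y) be a joint probability distribution on X × {R, −R̄} with all values and marginals strictly positive. Let f : X → ℝ satisfy 1 + f(x)·y > 0 for all x, y. Then Σ_{x,y} P(x,y)·ln(1 + f(x)·y) ≤ D_KL(P(y)‖Q(y)) + I(X:Y), where D_KL(P(y)‖Q(y)) = Σ_y P(y) ln(P(y)/Q(y)) and I(X:Y) = Σ_{x,y} P(x,y) ln(P(x,y)/(P(x)P(y))) is the mutual information. -/

import Mathlib

/-!
Write `P(x) = ∑_y P(x,y)` and `g(x,y) = 1 + f(x)·y`. The odds are fair for `Q`, i.e.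
`∑_y Q(y) g(x,y) = 1` for every `x`, so the positive weights `r(x,y) = P(x) Q(y) g(x,y)` have
the same total mass as `P`. By the chain rule, `D_KL(P(y)‖Q) + I(X:Y)` equals
`∑ P(x,y) ln (P(x,y) / (P(x) Q(y)))`, whose excess over the growth rate is
`∑ P ln (P / r) ≥ ∑ P - ∑ r = 0` by Gibbs' inequality.
-/

/-- Outcome value map for binary gambling: `true ↦ R` (win), `false ↦ -R̄` (loss). -/
noncomputable def val (R Rbar : ℝ) (b : Bool) : ℝ := if b then R else -Rbar

/-- The reference distribution `Q` on the two outcomes: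
`Q(R) = R̄/(R+R̄)`, `Q(-R̄) = R/(R+R̄)`. -/
noncomputable def Qb (R Rbar : ℝ) (b : Bool) : ℝ :=
  if b then Rbar / (R + Rbar) else R / (R + Rbar)

open Real

lemma Real.mul_log_div_le_sub {p r : ℝ} (hp : 0 ≤ p) (hr : 0 < r) :
    p * log (r / p) ≤ r - p := by
  rcases hp.eq_or_lt with rfl | hp
  · simpa using hr.le
  calc p * log (r / p) ≤ p * (r / p - 1) :=
        mul_le_mul_of_nonneg_left (log_le_sub_one_of_pos (div_pos hr hp)) hp.le
    _ = r - p := by field_simp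

lemma Real.sum_mul_log_div_le_sum_sub_sum {ι : Type*} (s : Finset ι) {p r : ι → ℝ}
    (hp : ∀ i ∈ s, 0 ≤ p i) (hr : ∀ i ∈ s, 0 < r i) :
    ∑ i ∈ s, p i * log (r i / p i) ≤ ∑ i ∈ s, r i - ∑ i ∈ s, p i := by
  rw [← Finset.sum_sub_distrib]
  exact Finset.sum_le_sum fun i hi => mul_log_div_le_sub (hp i hi) (hr i hi)

section SideInformation

open Finset

variable {X Y : Type*} [Fintype X] [Fintype Y]

lemma sum_marginal_mul_log_div_add_mutualInfo_eq {P : X → Y → ℝ} (hP : ∀ x y, 0 < P x y)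
    {q : Y → ℝ} (hq : ∀ y, q y ≠ 0) :
    (∑ y, (∑ x, P x y) * log ((∑ x, P x y) / q y))
        + ∑ x, ∑ y, P x y * log (P x y / ((∑ y', P x y') * (∑ x', P x' y)))
      = ∑ x, ∑ y, P x y * log (P x y / ((∑ y', P x y') * q y)) := by
  have hmarginal : ∑ y, (∑ x, P x y) * log ((∑ x, P x y) / q y)
      = ∑ x, ∑ y, P x y * log ((∑ x', P x' y) / q y) := by
    rw [sum_comm]
    exact sum_congr rfl fun y _ => sum_mul ..
  rw [hmarginal, ← sum_add_distrib]
  refine sum_congr rfl fun x _ => ?_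
  rw [← sum_add_distrib]
  refine sum_congr rfl fun y _ => ?_
  have hPx : 0 < ∑ y', P x y' := sum_pos (fun y' _ => hP x y') ⟨y, mem_univ y⟩
  have hPy : 0 < ∑ x', P x' y := sum_pos (fun x' _ => hP x' y) ⟨x, mem_univ x⟩
  rw [← mul_add,
    ← log_mul (div_ne_zero hPy.ne' (hq y)) (div_pos (hP x y) (mul_pos hPx hPy)).ne']
  congr 2
  field_simp

theorem sum_mul_log_le_of_sum_mul_eq_one {P : X → Y → ℝ} (hP : ∀ x y, 0 < P x y)
    {q : Y → ℝ} (hq : ∀ y, 0 < q y) {g : X → Y → ℝ} (hg : ∀ x y, 0 < g x y)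
    (hqg : ∀ x, ∑ y, q y * g x y = 1) :
    ∑ x, ∑ y, P x y * log (g x y)
      ≤ ∑ x, ∑ y, P x y * log (P x y / ((∑ y', P x y') * q y)) := by
  refine sum_le_sum fun x _ => ?_
  set Px := ∑ y', P x y' with hPx_def
  have hPx (y : Y) : 0 < Px := sum_pos (fun y' _ => hP x y') ⟨y, mem_univ y⟩
  have hgap : ∑ y, P x y * log (g x y) - ∑ y, P x y * log (P x y / (Px * q y))
      = ∑ y, P x y * log (Px * q y * g x y / P x y) := by
    rw [← sum_sub_distrib]
    refine sum_congr rfl fun y _ => ?_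
    rw [← mul_sub, ← log_div (hg x y).ne' (div_pos (hP x y) (mul_pos (hPx y) (hq y))).ne']
    congr 2
    field_simp
  have hmass : ∑ y, Px * q y * g x y = ∑ y, P x y := by
    simp_rw [mul_assoc, ← mul_sum, hqg, mul_one, hPx_def]
  have hgibbs := sum_mul_log_div_le_sum_sub_sum univ (fun y _ => (hP x y).le)
    (fun y _ => mul_pos (mul_pos (hPx y) (hq y)) (hg x y))
  linarith

end SideInformation

lemma Qb_pos {R Rbar : ℝ} (hR : 0 < R) (hRbar : 0 < Rbar) (b : Bool) : 0 < Qb R Rbar b := by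
  cases b <;> simp only [Qb, Bool.false_eq_true, if_true, if_false] <;> positivity

lemma sum_Qb_mul_one_add_mul_val {R Rbar : ℝ} (h : R + Rbar ≠ 0) (c : ℝ) :
    ∑ b, Qb R Rbar b * (1 + c * val R Rbar b) = 1 := by
  simp only [Fintype.sum_bool, Qb, val, if_true, if_false, Bool.false_eq_true]
  field_simp
  ring

theorem stmt6_general {X : Type*} [Fintype X]
    (R Rbar : ℝ) (hR : 0 < R) (hRbar : 0 < Rbar)
    (P : X → Bool → ℝ) (hP : ∀ x b, 0 < P x b)
    (f : X → ℝ) (hf : ∀ x b, 0 < 1 + f x * val R Rbar b) :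
    ∑ x, ∑ b, P x b * Real.log (1 + f x * val R Rbar b)
      ≤ (∑ b, (∑ x, P x b) * Real.log ((∑ x, P x b) / Qb R Rbar b))
        + ∑ x, ∑ b, P x b * Real.log (P x b / ((∑ b', P x b') * (∑ x', P x' b))) := by
  calc _ ≤ ∑ x, ∑ b, P x b * log (P x b / ((∑ b', P x b') * Qb R Rbar b)) :=
        sum_mul_log_le_of_sum_mul_eq_one hP (Qb_pos hR hRbar)
          (g := fun x b => 1 + f x * val R Rbar b) hf
          fun x => sum_Qb_mul_one_add_mul_val (by positivity) (f x)
    _ = _ := (sum_marginal_mul_log_div_add_mutualInfo_eq hP fun b => (Qb_pos hR hRbar b).ne').symm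

/-- In binary gambling with side information, the average capital growth rate is
bounded by `D_KL(P(y)‖Q(y)) + I(X:Y)`. -/
theorem stmt6 {X : Type*} [Fintype X]
    (R Rbar : ℝ) (hR : 0 < R) (hRbar : 0 < Rbar)
    (P : X → Bool → ℝ) (hP : ∀ x b, 0 < P x b) (hPsum : ∑ x, ∑ b, P x b = 1)
    (f : X → ℝ) (hf : ∀ x b, 0 < 1 + f x * val R Rbar b) :
    ∑ x, ∑ b, P x b * Real.log (1 + f x * val R Rbar b)
      ≤ (∑ b, (∑ x, P x b) * Real.log ((∑ x, P x b) / Qb R Rbar b))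
        + ∑ x, ∑ b, P x b * Real.log (P x b / ((∑ b', P x b') * (∑ x', P x' b))) :=
  stmt6_general R Rbar hR hRbar P hP f hf
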